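/- Let (β_n)_{n≥1} be a sequence of real numbers. If the series Σ_{n=1}^∞ n·β_n converges, then for each n the tail series Σ_{k=n}^∞ β_k converges, and the series Σ_{n=1}^∞ (Σ_{k=n}^∞ β_k) converges. -/

import Mathlib

/-!
Write `β k = k⁻¹ • (k • β k)`. Abel's inequality for the antitone weights `k⁻¹` bounds
`m * ‖∑_{m ≤ k < n} β k‖` by the oscillation of the partial sums of `∑ k • β k` beyond `m`, which
tends to zero. This gives at once the convergence of `∑ β k`, hence of its tails `t m`, and
`m * t m → 0`. Exchanging the order of summation,
`∑_{n < N} t n = N * t N + ∑_{k < N} (k + 1) * β k`, and both terms converge.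
-/

open Finset Filter Topology

section Abel

variable {E : Type*} [NormedAddCommGroup E] [NormedSpace ℝ E]

theorem sum_Ico_smul_eq_smul_add_sum_Ico_sub_smul (c : ℕ → ℝ) (a : ℕ → E) {m n : ℕ}
    (hmn : m ≤ n) :
    ∑ k ∈ Ico m n, c k • a k
      = c n • ∑ k ∈ Ico m n, a k + ∑ k ∈ Ico m n, (c k - c (k + 1)) • ∑ j ∈ Ico m (k + 1), a j := by
  induction n, hmn using Nat.le_induction with
  | base => simp
  | succ n hmn ih =>
    rw [sum_Ico_succ_top hmn, ih, sum_Ico_succ_top hmn (fun k => (c k - c (k + 1)) • _),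
      sum_Ico_succ_top hmn a]
    simp only [sub_smul, smul_add]
    abel

/-- **Abel's inequality**. -/
theorem norm_sum_Ico_smul_le_of_antitoneOn {c : ℕ → ℝ} {a : ℕ → E} {m n : ℕ} {ε : ℝ}
    (hmn : m ≤ n) (hc : AntitoneOn c (Set.Icc m n)) (hcn : 0 ≤ c n)
    (ha : ∀ j ∈ Icc m n, ‖∑ k ∈ Ico m j, a k‖ ≤ ε) :
    ‖∑ k ∈ Ico m n, c k • a k‖ ≤ c m * ε := by
  have hstep : ∀ k ∈ Ico m n, 0 ≤ c k - c (k + 1) := by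
    intro k hk
    obtain ⟨hmk, hkn⟩ := mem_Ico.1 hk
    exact sub_nonneg.2 (hc ⟨hmk, hkn.le⟩ ⟨by omega, hkn⟩ k.le_succ)
  rw [sum_Ico_smul_eq_smul_add_sum_Ico_sub_smul c a hmn]
  calc _ ≤ c n * ε + ∑ k ∈ Ico m n, (c k - c (k + 1)) * ε := by
        refine (norm_add_le _ _).trans (add_le_add ?_ ((norm_sum_le _ _).trans ?_))
        · rw [norm_smul, Real.norm_of_nonneg hcn]
          exact mul_le_mul_of_nonneg_left (ha n (right_mem_Icc.2 hmn)) hcn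
        · refine sum_le_sum fun k hk => ?_
          rw [norm_smul, Real.norm_of_nonneg (hstep k hk)]
          refine mul_le_mul_of_nonneg_left (ha _ ?_) (hstep k hk)
          obtain ⟨hmk, hkn⟩ := mem_Ico.1 hk
          exact mem_Icc.2 ⟨by omega, by omega⟩
    _ = c m * ε := by
        have htelescope : ∑ k ∈ Ico m n, (c k - c (k + 1)) = c m - c n := by
          simpa [neg_add_eq_sub] using sum_Ico_sub (fun k => -c k) hmn
        rw [← sum_mul, htelescope]
        ring

theorem eventually_forall_mul_norm_sum_Ico_le {β : ℕ → E}
    (h : CauchySeq fun N => ∑ k ∈ range N, (k : ℝ) • β k) {ε : ℝ} (hε : 0 < ε) :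
    ∀ᶠ m : ℕ in atTop, ∀ n, m ≤ n → (m : ℝ) * ‖∑ k ∈ Ico m n, β k‖ ≤ ε := by
  obtain ⟨K, hK⟩ := Metric.cauchySeq_iff.1 h ε hε
  filter_upwards [eventually_ge_atTop (max K 1)] with m hm n hmn
  have hKm : K ≤ m := le_of_max_le_left hm
  have hm_pos : (0 : ℝ) < m := by exact_mod_cast le_of_max_le_right hm
  have hβ : ∑ k ∈ Ico m n, β k = ∑ k ∈ Ico m n, (k : ℝ)⁻¹ • ((k : ℝ) • β k) := by
    refine sum_congr rfl fun k hk => ?_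
    have hk : (0 : ℝ) < k := hm_pos.trans_le (by exact_mod_cast (mem_Ico.1 hk).1)
    rw [smul_smul, inv_mul_cancel₀ hk.ne', one_smul]
  have hanti : AntitoneOn (fun k : ℕ => (k : ℝ)⁻¹) (Set.Icc m n) := fun i hi j _ hij =>
    inv_anti₀ (hm_pos.trans_le (by exact_mod_cast hi.1)) (by exact_mod_cast hij)
  have hpartial : ∀ j ∈ Icc m n, ‖∑ k ∈ Ico m j, (k : ℝ) • β k‖ ≤ ε := fun j hj => by
    rw [sum_Ico_eq_sub _ (mem_Icc.1 hj).1, ← dist_eq_norm]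
    exact (hK j (hKm.trans (mem_Icc.1 hj).1) m hKm).le
  calc (m : ℝ) * ‖∑ k ∈ Ico m n, β k‖ ≤ m * ((m : ℝ)⁻¹ * ε) := by
        rw [hβ]
        gcongr
        exact norm_sum_Ico_smul_le_of_antitoneOn hmn hanti (by positivity) hpartial
    _ = ε := by field_simp

theorem cauchySeq_sum_range_of_cauchySeq_nat_smul {β : ℕ → E}
    (h : CauchySeq fun N => ∑ k ∈ range N, (k : ℝ) • β k) :
    CauchySeq fun N => ∑ k ∈ range N, β k := by
  refine Metric.cauchySeq_iff'.2 fun ε hε => ?_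
  obtain ⟨m, hm, hm_pos⟩ :=
    ((eventually_forall_mul_norm_sum_Ico_le h (half_pos hε)).and (eventually_ge_atTop 1)).exists
  refine ⟨m, fun n hn => ?_⟩
  rw [dist_eq_norm, ← sum_Ico_eq_sub _ hn]
  calc ‖∑ k ∈ Ico m n, β k‖ ≤ m * ‖∑ k ∈ Ico m n, β k‖ :=
        le_mul_of_one_le_left (norm_nonneg _) (by exact_mod_cast hm_pos)
    _ ≤ ε / 2 := hm n hn
    _ < ε := half_lt_self hε

theorem tendsto_sum_Ico_atTop {G : Type*} [AddCommGroup G] [TopologicalSpace G]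
    [IsTopologicalAddGroup G] {f : ℕ → G} {L : G}
    (h : Tendsto (fun N => ∑ k ∈ range N, f k) atTop (𝓝 L)) (m : ℕ) :
    Tendsto (fun n => ∑ k ∈ Ico m n, f k) atTop (𝓝 (L - ∑ k ∈ range m, f k)) :=
  (h.sub_const _).congr' <| (eventually_ge_atTop m).mono fun _ hn => (sum_Ico_eq_sub f hn).symm

theorem tendsto_nat_smul_sub_sum_range {β : ℕ → E} {L : E}
    (h : CauchySeq fun N => ∑ k ∈ range N, (k : ℝ) • β k)
    (hL : Tendsto (fun N => ∑ k ∈ range N, β k) atTop (𝓝 L)) :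
    Tendsto (fun m : ℕ => (m : ℝ) • (L - ∑ k ∈ range m, β k)) atTop (𝓝 0) := by
  refine NormedAddGroup.tendsto_nhds_zero.2 fun ε hε => ?_
  filter_upwards [eventually_forall_mul_norm_sum_Ico_le h (half_pos hε)] with m hm
  have hlim : Tendsto (fun n => (m : ℝ) * ‖∑ k ∈ Ico m n, β k‖) atTop
      (𝓝 ((m : ℝ) * ‖L - ∑ k ∈ range m, β k‖)) :=
    (tendsto_sum_Ico_atTop hL m).norm.const_mul _
  rw [norm_smul, Real.norm_natCast]
  exact (le_of_tendsto hlim ((eventually_ge_atTop m).mono hm)).trans_lt (half_lt_self hε)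

end Abel

theorem sum_range_sum_range_add_sum_range_succ_nsmul {M : Type*} [AddCommMonoid M]
    (f : ℕ → M) (N : ℕ) :
    ∑ n ∈ range N, ∑ k ∈ range n, f k + ∑ k ∈ range N, (k + 1) • f k
      = N • ∑ k ∈ range N, f k := by
  induction N with
  | zero => simp
  | succ N ih =>
    rw [sum_range_succ, sum_range_succ, add_add_add_comm, ih]
    simp only [sum_range_succ, succ_nsmul, nsmul_add]
    abel

/-- **Lemma 2.3(ii) (Asmussen).** If `Σ n β_n` converges, then every tail series
`Σ_{k ≥ n} β_k` converges, and the series of tails `Σ_n (Σ_{k ≥ n} β_k)` converges. -/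
theorem sum_of_tails_converges (β : ℕ → ℝ)
    (hconv : ∃ l : ℝ,
      Tendsto (fun N : ℕ => ∑ n ∈ Finset.range N, (n : ℝ) * β n) atTop (nhds l)) :
    ∃ t : ℕ → ℝ,
      (∀ n : ℕ, Tendsto (fun M : ℕ => ∑ k ∈ Finset.Ico n M, β k) atTop (nhds (t n))) ∧
      ∃ L : ℝ, Tendsto (fun N : ℕ => ∑ n ∈ Finset.range N, t n) atTop (nhds L) := by
  obtain ⟨l, hl⟩ := hconv
  have hA : CauchySeq fun N => ∑ k ∈ range N, (k : ℝ) • β k := by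
    simpa only [smul_eq_mul] using hl.cauchySeq
  obtain ⟨L, hL⟩ := cauchySeq_tendsto_of_complete (cauchySeq_sum_range_of_cauchySeq_nat_smul hA)
  refine ⟨fun n => L - ∑ k ∈ range n, β k, tendsto_sum_Ico_atTop hL, l + L, ?_⟩
  have hpartial : ∀ N : ℕ, ∑ n ∈ range N, (L - ∑ k ∈ range n, β k)
      = (N : ℝ) • (L - ∑ k ∈ range N, β k)
        + (∑ k ∈ range N, (k : ℝ) * β k + ∑ k ∈ range N, β k) := fun N => by
    have := sum_range_sum_range_add_sum_range_succ_nsmul β N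
    simp only [nsmul_eq_mul, Nat.cast_add, Nat.cast_one, add_mul, one_mul, sum_add_distrib,
      sum_sub_distrib, sum_const, card_range, smul_eq_mul] at this ⊢
    linarith
  simpa only [hpartial, zero_add] using (tendsto_nat_smul_sub_sum_range hA hL).add (hl.add hL)
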